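/- arXiv:1309.7648 — 2 statements merged into one kernel-verified Lean document; each statement's English description precedes it below -/
import Mathlib

section
/- Let n ≥ 2 and let A be a symmetric real n×n matrix. Set t = tr(A) and K = (Σ_{j=1}^n A_{1j}²)^{1/2} (the Euclidean norm of the first row of A). Then the squared Frobenius norm of A satisfies ‖A‖_F² = Σ_{i,j=1}^n A_{ij}² ≥ (1/(n−1))·(K − |t|)² + K². -/
/-- Pointwise algebraic content of Kato's inequality for weighted harmonic one-forms:
for a symmetric real `n × n` matrix `A` (`n ≥ 2`), with `t = tr A` and
`K` the Euclidean norm of the first row of `A`, one has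
`‖A‖_F² ≥ (1/(n−1))·(K − |t|)² + K²`. -/
theorem kato_inequality_pointwise (n : ℕ) (hn : 2 ≤ n)
    (A : Matrix (Fin n) (Fin n) ℝ) (hA : A.IsSymm)
    (t : ℝ) (ht : t = A.trace)
    (K : ℝ) (hK : K = Real.sqrt (∑ j, (A ⟨0, by omega⟩ j) ^ 2)) :
    ∑ i, ∑ j, (A i j) ^ 2 ≥ (1 / ((n : ℝ) - 1)) * (K - |t|) ^ 2 + K ^ 2 := by
  set e0 : Fin n := ⟨0, by omega⟩ with he0
  set a : ℝ := A e0 e0 with ha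
  set s : Finset (Fin n) := Finset.univ.erase e0 with hs
  -- K² equals the sum of squares of the first row
  have hK0 : 0 ≤ K := by rw [hK]; exact Real.sqrt_nonneg _
  have hK2 : K ^ 2 = ∑ j, (A e0 j) ^ 2 := by
    rw [hK, sq, Real.mul_self_sqrt (Finset.sum_nonneg fun j _ => sq_nonneg _)]
  -- split off the e0 term
  have hrow : K ^ 2 = a ^ 2 + ∑ j ∈ s, (A e0 j) ^ 2 := by
    rw [hK2, ← Finset.add_sum_erase _ _ (Finset.mem_univ e0)]
  have hrow_nonneg : 0 ≤ ∑ j ∈ s, (A e0 j) ^ 2 :=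
    Finset.sum_nonneg fun j _ => sq_nonneg _
  -- trace
  have htr : t = a + ∑ i ∈ s, A i i := by
    rw [ht]
    simp only [Matrix.trace, Matrix.diag]
    rw [← Finset.add_sum_erase _ _ (Finset.mem_univ e0)]
  -- Cauchy–Schwarz on the remaining diagonal
  have hcard : (s.card : ℝ) = (n : ℝ) - 1 := by
    have : s.card = n - 1 := by
      rw [hs, Finset.card_erase_of_mem (Finset.mem_univ e0)]
      simp
    rw [this]
    have : (1 : ℕ) ≤ n := by omega
    push_cast [this]
    ring
  have hCS : (∑ i ∈ s, A i i) ^ 2 ≤ ((n : ℝ) - 1) * ∑ i ∈ s, (A i i) ^ 2 := by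
    have := sq_sum_le_card_mul_sum_sq (s := s) (f := fun i => A i i)
    calc (∑ i ∈ s, A i i) ^ 2 ≤ (s.card : ℝ) * ∑ i ∈ s, (A i i) ^ 2 := by
          exact_mod_cast this
      _ = ((n : ℝ) - 1) * ∑ i ∈ s, (A i i) ^ 2 := by rw [hcard]
  -- lower bound for each off-first row
  have key : ∀ i ∈ s, (A e0 i) ^ 2 + (A i i) ^ 2 ≤ ∑ j, (A i j) ^ 2 := by
    intro i hi
    have hne : e0 ≠ i := (Finset.ne_of_mem_erase hi).symm
    have hpair : (A i e0) ^ 2 + (A i i) ^ 2 = ∑ j ∈ ({e0, i} : Finset (Fin n)), (A i j) ^ 2 := by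
      rw [Finset.sum_pair hne]
    rw [hA.apply e0 i] at hpair
    rw [hpair]
    exact Finset.sum_le_sum_of_subset_of_nonneg (Finset.subset_univ _)
      (fun j _ _ => sq_nonneg _)
  -- assemble the lower bound for the full sum
  have hS : K ^ 2 + (∑ i ∈ s, (A e0 i) ^ 2 + ∑ i ∈ s, (A i i) ^ 2)
      ≤ ∑ i, ∑ j, (A i j) ^ 2 := by
    rw [← Finset.add_sum_erase _ (fun i => ∑ j, (A i j) ^ 2) (Finset.mem_univ e0), ← hs, ← hK2]
    have : ∑ i ∈ s, (A e0 i) ^ 2 + ∑ i ∈ s, (A i i) ^ 2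
        ≤ ∑ i ∈ s, ∑ j, (A i j) ^ 2 := by
      rw [← Finset.sum_add_distrib]
      exact Finset.sum_le_sum key
    linarith
  -- final algebra
  have ha2 : a ^ 2 ≤ K ^ 2 := by nlinarith [hrow_nonneg, hrow]
  have haK1 : a ≤ K := by nlinarith [sq_nonneg (a - K), sq_nonneg (a + K)]
  have haK2 : -K ≤ a := by nlinarith [sq_nonneg (a - K), sq_nonneg (a + K)]
  have hd2 : ∑ i ∈ s, (A i i) ^ 2 ≥ (t - a) ^ 2 / ((n : ℝ) - 1) := by
    have hn1 : (0 : ℝ) < (n : ℝ) - 1 := by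
      have : (2 : ℝ) ≤ (n : ℝ) := by exact_mod_cast hn
      linarith
    rw [ge_iff_le, div_le_iff₀ hn1]
    have : (t - a) ^ 2 = (∑ i ∈ s, A i i) ^ 2 := by rw [htr]; ring_nf
    rw [this]
    linarith [hCS]
  have hrow' : ∑ i ∈ s, (A e0 i) ^ 2 = K ^ 2 - a ^ 2 := by linarith [hrow]
  have hn1 : (1 : ℝ) ≤ (n : ℝ) - 1 := by
    have : (2 : ℝ) ≤ (n : ℝ) := by exact_mod_cast hn
    linarith
  have hn1' : (0 : ℝ) < (n : ℝ) - 1 := by linarith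
  have habs1 : t ≤ |t| := le_abs_self t
  have habs2 : -t ≤ |t| := neg_le_abs t
  have habs3 : |t| ^ 2 = t ^ 2 := sq_abs t
  have hmain : (K - |t|) ^ 2 / ((n : ℝ) - 1) ≤ (K ^ 2 - a ^ 2) + (t - a) ^ 2 / ((n : ℝ) - 1) := by
    rw [div_le_iff₀ hn1', add_mul, div_mul_cancel₀ _ (ne_of_gt hn1')]
    nlinarith [mul_nonneg (sub_nonneg.mpr haK1) (by linarith : (0:ℝ) ≤ |t| + t),
      mul_nonneg (by linarith : (0:ℝ) ≤ K + a) (by linarith : (0:ℝ) ≤ |t| - t),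
      mul_nonneg (by nlinarith : (0:ℝ) ≤ K ^ 2 - a ^ 2) (by linarith : (0:ℝ) ≤ (n:ℝ) - 2)]
  have : (1 / ((n : ℝ) - 1)) * (K - |t|) ^ 2 = (K - |t|) ^ 2 / ((n : ℝ) - 1) := by ring
  rw [ge_iff_le, this]
  calc (K - |t|) ^ 2 / ((n : ℝ) - 1) + K ^ 2
      ≤ ((K ^ 2 - a ^ 2) + (t - a) ^ 2 / ((n : ℝ) - 1)) + K ^ 2 := by linarith
    _ ≤ K ^ 2 + (∑ i ∈ s, (A e0 i) ^ 2 + ∑ i ∈ s, (A i i) ^ 2) := by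
        rw [hrow']; linarith [hd2]
    _ ≤ ∑ i, ∑ j, (A i j) ^ 2 := hS
end

section
/- Let n ≥ 3 and let A be a symmetric real n×n matrix with t = tr(A) and K = (Σ_{j=1}^n A_{1j}²)^{1/2}. If equality holds in the inequality ‖A‖_F² ≥ (1/(n−1))·(K − |t|)² + K², then A is diagonal and there exist real numbers λ₁, λ₂ such that A = diag(λ₁, λ₂, λ₂, …, λ₂) with λ₁ = t − (n−1)λ₂. -/
set_option maxHeartbeats 1600000


/-- Equality case of the pointwise Kato inequality (Lemma 3 of the paper):
for a symmetric real `n × n` matrix `A` (`n ≥ 3`), with `t = tr A` and `K` the Euclidean norm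
of the first row of `A`, if `‖A‖_F² = (1/(n−1))·(K − |t|)² + K²`, then `A` is the diagonal
matrix `diag(λ₁, λ₂, …, λ₂)` with `λ₁ = t − (n−1)·λ₂`. -/
theorem kato_equality_case (n : ℕ) (hn : 3 ≤ n)
    (A : Matrix (Fin n) (Fin n) ℝ) (hA : A.IsSymm)
    (t : ℝ) (ht : t = A.trace)
    (K : ℝ) (hK : K = Real.sqrt (∑ j, (A ⟨0, by omega⟩ j) ^ 2))
    (heq : ∑ i, ∑ j, (A i j) ^ 2 = (1 / ((n : ℝ) - 1)) * (K - |t|) ^ 2 + K ^ 2) :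
    ∃ lam₁ lam₂ : ℝ, lam₁ = t - ((n : ℝ) - 1) * lam₂ ∧
      A = Matrix.diagonal (fun i => if i = ⟨0, by omega⟩ then lam₁ else lam₂) := by
  have hn0 : 0 < n := by omega
  set z : Fin n := ⟨0, hn0⟩ with hzdef
  set s : Finset (Fin n) := Finset.univ.erase z with hsdef
  set m : ℝ := (n : ℝ) - 1 with hmdef
  have hm2 : (2 : ℝ) ≤ m := by
    have : (3 : ℝ) ≤ (n : ℝ) := by exact_mod_cast hn
    simp only [hmdef]; linarith
  have hm0 : m ≠ 0 := by linarith
  have hsplit : ∀ f : Fin n → ℝ, ∑ i, f i = f z + ∑ i ∈ s, f i := fun f =>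
    (Finset.add_sum_erase _ f (Finset.mem_univ z)).symm
  have hcard : (s.card : ℝ) = m := by
    have : s.card = n - 1 := by
      simp [hsdef, Finset.card_erase_of_mem, Finset.card_univ]
    rw [this, hmdef]
    have : (1:ℕ) ≤ n := by omega
    push_cast [this]; ring
  set a : ℝ := A z z with hadef
  set S1 : ℝ := ∑ j ∈ s, A z j ^ 2 with hS1def
  set D : ℝ := ∑ i ∈ s, A i i ^ 2 with hDdef
  set Soff : ℝ := ∑ i ∈ s, ∑ j ∈ s.erase i, A i j ^ 2 with hSoffdef
  set P : ℝ := ∑ i ∈ s, A i i with hPdef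
  set Q : ℝ := ∑ i ∈ s, ∑ j ∈ s, (A i i - A j j) ^ 2 with hQdef
  have hsymm : ∀ i j, A j i = A i j := fun i j => hA.apply i j
  -- K basics
  have hK0 : 0 ≤ K := by rw [hK]; exact Real.sqrt_nonneg _
  have hK2 : K ^ 2 = a ^ 2 + S1 := by
    rw [hK, Real.sq_sqrt (by positivity)]
    exact hsplit (fun j => A z j ^ 2)
  have hS1nn : 0 ≤ S1 := Finset.sum_nonneg fun _ _ => sq_nonneg _
  have hSoffnn : 0 ≤ Soff :=
    Finset.sum_nonneg fun _ _ => Finset.sum_nonneg fun _ _ => sq_nonneg _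
  have hQnn : 0 ≤ Q :=
    Finset.sum_nonneg fun _ _ => Finset.sum_nonneg fun _ _ => sq_nonneg _
  -- trace
  have htr : t = a + P := by
    rw [ht, Matrix.trace]
    simpa [Matrix.diag] using hsplit (fun i => A i i)
  -- total sum decomposition
  have hT : ∑ i, ∑ j, (A i j) ^ 2 = K ^ 2 + (S1 + (D + Soff)) := by
    rw [hsplit (fun i => ∑ j, A i j ^ 2)]
    have h1 : ∑ j, A z j ^ 2 = K ^ 2 := by
      rw [hK, Real.sq_sqrt (by positivity)]
    have h2 : ∑ i ∈ s, ∑ j, A i j ^ 2 = S1 + (D + Soff) := by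
      have : ∀ i ∈ s, ∑ j, A i j ^ 2
          = A z i ^ 2 + (A i i ^ 2 + ∑ j ∈ s.erase i, A i j ^ 2) := by
        intro i hi
        rw [hsplit (fun j => A i j ^ 2), hsymm i z,
          ← Finset.add_sum_erase s (fun j => A i j ^ 2) hi]
      rw [Finset.sum_congr rfl this, Finset.sum_add_distrib, Finset.sum_add_distrib]
    rw [h1, h2]
  -- Q identity
  have hQid : Q = 2 * m * D - 2 * P ^ 2 := by
    have e1 : Q = ∑ i ∈ s, ((s.card : ℝ) * A i i ^ 2 - 2 * (A i i * P) + D) := by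
      refine Finset.sum_congr rfl fun i _ => ?_
      have e0 : ∑ j ∈ s, (A i i - A j j) ^ 2
          = ∑ j ∈ s, (A i i ^ 2 - 2 * (A i i * A j j) + A j j ^ 2) :=
        Finset.sum_congr rfl fun j _ => by ring
      rw [e0, Finset.sum_add_distrib, Finset.sum_sub_distrib, Finset.sum_const,
        nsmul_eq_mul, ← Finset.mul_sum, ← Finset.mul_sum, ← hPdef, ← hDdef]
    rw [e1, Finset.sum_add_distrib, Finset.sum_sub_distrib, Finset.sum_const,
      nsmul_eq_mul, ← Finset.mul_sum, ← Finset.mul_sum, ← Finset.sum_mul, ← hPdef,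
      ← hDdef, hcard]
    ring
  -- main scalar equation
  have hmain : 2 * m * S1 + 2 * m * Soff + Q + 2 * P ^ 2 = 2 * (K - |t|) ^ 2 := by
    rw [hT] at heq
    have h' : S1 + (D + Soff) = 1 / m * (K - |t|) ^ 2 := by linarith
    have h : m * (S1 + (D + Soff)) = (K - |t|) ^ 2 := by
      rw [h']; field_simp
    nlinarith [h, hQid]
  clear_value a S1 D Soff P Q
  clear heq hT hK ht hsplit
  -- abs facts
  set u : ℝ := |a| with hudef
  set v : ℝ := |t| with hvdef
  have hu0 : 0 ≤ u := abs_nonneg _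
  have hv0 : 0 ≤ v := abs_nonneg _
  have hu2 : u ^ 2 = a ^ 2 := sq_abs a
  have hv2 : v ^ 2 = t ^ 2 := sq_abs t
  clear_value u v
  have hKu : u ≤ K := by
    have h : u ^ 2 ≤ K ^ 2 := by rw [hu2, hK2]; linarith
    exact le_of_pow_le_pow_left₀ two_ne_zero hK0 h
  have habs : (v - u) ^ 2 ≤ P ^ 2 := by
    have h1 : v - u ≤ |t - a| := by
      rw [hudef, hvdef]; exact abs_sub_abs_le_abs_sub t a
    have h2 : -(|t - a|) ≤ v - u := by
      have h5 := abs_sub_abs_le_abs_sub a t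
      rw [abs_sub_comm a t] at h5
      rw [hudef, hvdef]; linarith
    have h3 : (v - u) ^ 2 ≤ |t - a| ^ 2 := sq_le_sq' h2 h1
    have h4 : P = t - a := by rw [htr]; ring
    rw [h4, ← sq_abs (t - a)]
    exact h3
  -- key nonnegative combination
  have hX : 2 * (K - u) * ((m - 1) * (K + u) + 2 * v) + 2 * m * Soff + Q ≤ 0 := by
    nlinarith [hmain, habs, hK2, hu2, hv2]
  have hc1 : 0 ≤ 2 * (K - u) * ((m - 1) * (K + u) + 2 * v) := by
    have : 0 ≤ (m - 1) * (K + u) := mul_nonneg (by linarith) (by linarith)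
    have : 0 ≤ (m - 1) * (K + u) + 2 * v := by linarith
    have hKu' : 0 ≤ K - u := by linarith
    positivity
  have hmSoff : 0 ≤ m * Soff := mul_nonneg (by linarith) hSoffnn
  -- extract the three zeros
  have hSoff0 : Soff = 0 := by nlinarith [hX, hc1, hQnn, hSoffnn, mul_nonneg (by linarith : (0:ℝ) ≤ m - 2) hSoffnn]
  have hQ0 : Q = 0 := by linarith [hX, hc1, hmSoff, hQnn]
  have hKa : K ^ 2 = a ^ 2 := by
    have hprod : (K - u) * ((m - 1) * (K + u) + 2 * v) ≤ 0 := by linarith [hX, hmSoff, hQnn]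
    have h1 : 0 ≤ (K - u) * v := mul_nonneg (by linarith) hv0
    have h2 : 0 ≤ (m - 2) * ((K - u) * (K + u)) :=
      mul_nonneg (by linarith) (mul_nonneg (by linarith) (by linarith))
    nlinarith [hprod, h1, h2, hu2, hK2, hS1nn]
  have hS10 : S1 = 0 := by linarith [hK2, hKa]
  -- pointwise zero facts
  have hrow : ∀ j ∈ s, A z j = 0 := by
    intro j hj
    have h0 : ∑ j ∈ s, A z j ^ 2 = 0 := by rw [← hS1def]; exact hS10
    have := (Finset.sum_eq_zero_iff_of_nonneg (fun i _ => sq_nonneg (A z i))).mp h0 j hj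
    exact pow_eq_zero_iff (two_ne_zero) |>.mp this
  have hoff : ∀ i ∈ s, ∀ j ∈ s.erase i, A i j = 0 := by
    intro i hi j hj
    have hin : ∑ j ∈ s.erase i, A i j ^ 2 = 0 :=
      (Finset.sum_eq_zero_iff_of_nonneg fun k _ =>
        Finset.sum_nonneg fun _ _ => sq_nonneg _).mp (by rw [← hSoffdef]; exact hSoff0) i hi
    have := (Finset.sum_eq_zero_iff_of_nonneg (fun k _ => sq_nonneg (A i k))).mp hin j hj
    exact pow_eq_zero_iff (two_ne_zero) |>.mp this
  have hdiag : ∀ i ∈ s, ∀ j ∈ s, A i i = A j j := by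
    intro i hi j hj
    have hin : ∑ j ∈ s, (A i i - A j j) ^ 2 = 0 :=
      (Finset.sum_eq_zero_iff_of_nonneg fun k _ =>
        Finset.sum_nonneg fun _ _ => sq_nonneg _).mp (by rw [← hQdef]; exact hQ0) i hi
    have := (Finset.sum_eq_zero_iff_of_nonneg (fun k _ => sq_nonneg _)).mp hin j hj
    have := pow_eq_zero_iff (two_ne_zero) |>.mp this
    linarith
  -- build the answer
  have hi₁ : (⟨1, by omega⟩ : Fin n) ∈ s := by
    refine Finset.mem_erase.mpr ⟨?_, Finset.mem_univ _⟩
    simp [hzdef, Fin.ext_iff]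
  set i₁ : Fin n := ⟨1, by omega⟩ with hi₁def
  refine ⟨A z z, A i₁ i₁, ?_, ?_⟩
  · -- lam₁ = t - m * lam₂
    have hPval : P = m * A i₁ i₁ := by
      rw [hPdef]
      rw [Finset.sum_congr rfl (fun i hi => hdiag i hi i₁ hi₁), Finset.sum_const,
        nsmul_eq_mul, hcard]
    rw [← hadef, htr, hPval]; ring
  · have : A = Matrix.diagonal (fun i => if i = z then A z z else A i₁ i₁) := by
      ext i j
      by_cases hij : i = j
      · subst hij
        rw [Matrix.diagonal_apply_eq]
        by_cases hi : i = z
        · subst hi; rw [if_pos rfl]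
        · rw [if_neg hi]
          exact hdiag i (Finset.mem_erase.mpr ⟨hi, Finset.mem_univ _⟩) i₁ hi₁
      · rw [Matrix.diagonal_apply_ne _ hij]
        by_cases hi : i = z
        · subst hi
          exact hrow j (Finset.mem_erase.mpr ⟨fun h => hij h.symm, Finset.mem_univ _⟩)
        · by_cases hj : j = z
          · subst hj
            rw [hsymm]
            exact hrow i (Finset.mem_erase.mpr ⟨hi, Finset.mem_univ _⟩)
          · exact hoff i (Finset.mem_erase.mpr ⟨hi, Finset.mem_univ _⟩) j
              (Finset.mem_erase.mpr ⟨fun h => hij h.symm, Finset.mem_erase.mpr ⟨hj, Finset.mem_univ _⟩⟩)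
    exact this
end
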